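/- arXiv:2307.15774 — 7 statements merged into one kernel-verified Lean document; each statement's English description precedes it below -/
import Mathlib

section
/- If Σ is a positive definite q×q matrix solving Σ = (1/n)∑ᵢ u(xᵢᵀΣ⁻¹xᵢ)xᵢxᵢᵀ + η I_q where η > 0, u(s) ≥ 0, and ψ(s) = s·u(s) satisfies ψ(s) ≤ κ for all s ≥ 0 with κ < 1, then η I_q ≤ Σ ≤ (η/(1−κ)) I_q in the Loewner order. -/
open Matrix BigOperators

lemma cs_aux {q : ℕ} {S : Matrix (Fin q) (Fin q) ℝ} (hS : S.PosSemidef) (a b : Fin q → ℝ) :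
    (a ⬝ᵥ S *ᵥ b) ^ 2 ≤ (a ⬝ᵥ S *ᵥ a) * (b ⬝ᵥ S *ᵥ b) := by
  have hT : Sᵀ = S := by
    have h := hS.1
    rwa [Matrix.IsHermitian, Matrix.conjTranspose_eq_transpose_of_trivial] at h
  have hsymm : ∀ u v : Fin q → ℝ, u ⬝ᵥ S *ᵥ v = v ⬝ᵥ S *ᵥ u := by
    intro u v
    rw [dotProduct_mulVec, ← mulVec_transpose, hT, dotProduct_comm]
  have key : ∀ t : ℝ, 0 ≤ (b ⬝ᵥ S *ᵥ b) * (t * t) + (2 * (a ⬝ᵥ S *ᵥ b)) * t + (a ⬝ᵥ S *ᵥ a) := by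
    intro t
    have h := hS.dotProduct_mulVec_nonneg (a + t • b)
    simp only [star_trivial, mulVec_add, mulVec_smul, dotProduct_add, add_dotProduct,
      dotProduct_smul, smul_dotProduct, smul_eq_mul] at h
    have hba : b ⬝ᵥ S *ᵥ a = a ⬝ᵥ S *ᵥ b := hsymm b a
    rw [hba] at h
    ring_nf at h ⊢
    linarith [h]
  have hd := discrim_le_zero key
  rw [discrim] at hd
  nlinarith [hd]

lemma cs_aux2 {q : ℕ} {S : Matrix (Fin q) (Fin q) ℝ} (hS : S.PosDef) (a v : Fin q → ℝ) :
    (a ⬝ᵥ v) ^ 2 ≤ (a ⬝ᵥ S⁻¹ *ᵥ a) * (v ⬝ᵥ S *ᵥ v) := by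
  have hdet : IsUnit S.det := isUnit_iff_ne_zero.mpr hS.det_pos.ne'
  have hTinv : (S⁻¹)ᵀ = S⁻¹ := by
    have h := hS.1.inv
    rwa [Matrix.IsHermitian, Matrix.conjTranspose_eq_transpose_of_trivial] at h
  have hrw : ∀ w : Fin q → ℝ, (S⁻¹ *ᵥ a) ⬝ᵥ w = a ⬝ᵥ (S⁻¹ *ᵥ w) := by
    intro w
    rw [dotProduct_comm, dotProduct_mulVec, ← mulVec_transpose, hTinv, dotProduct_comm]
  have h1 : (S⁻¹ *ᵥ a) ⬝ᵥ (S *ᵥ v) = a ⬝ᵥ v := by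
    rw [hrw, mulVec_mulVec, Matrix.nonsing_inv_mul _ hdet, one_mulVec]
  have h2 : (S⁻¹ *ᵥ a) ⬝ᵥ (S *ᵥ (S⁻¹ *ᵥ a)) = a ⬝ᵥ S⁻¹ *ᵥ a := by
    rw [hrw, mulVec_mulVec, mulVec_mulVec, Matrix.nonsing_inv_mul _ hdet, Matrix.one_mul]
  have := cs_aux hS.posSemidef (S⁻¹ *ᵥ a) v
  rw [h1, h2] at this
  exact this

lemma sum_mulVec' {q n : ℕ} (A : Fin n → Matrix (Fin q) (Fin q) ℝ) (v : Fin q → ℝ) :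
    (∑ i, A i) *ᵥ v = ∑ i, (A i *ᵥ v) := by
  ext j
  simp [mulVec, dotProduct, Matrix.sum_apply, Finset.sum_apply, Finset.sum_mul]
  rw [Finset.sum_comm]

lemma dotProduct_sum' {q n : ℕ} (v : Fin q → ℝ) (w : Fin n → Fin q → ℝ) :
    v ⬝ᵥ (∑ i, w i) = ∑ i, v ⬝ᵥ w i := by
  simp [dotProduct, Finset.sum_apply, Finset.mul_sum]
  rw [Finset.sum_comm]

lemma vecMulVec_mulVec' {q : ℕ} (a v : Fin q → ℝ) :
    vecMulVec a a *ᵥ v = (a ⬝ᵥ v) • a := by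
  ext j
  simp [vecMulVec_apply, mulVec, dotProduct, Finset.mul_sum, Finset.sum_mul, mul_assoc,
    mul_comm, mul_left_comm]

/-- If `S > 0` solves `S = (1/n) ∑ᵢ u(xᵢᵀS⁻¹xᵢ) xᵢxᵢᵀ + η I` with `η > 0`,
`u ≥ 0` and `ψ(s) = s·u(s) ≤ κ < 1` on `s ≥ 0`, then `η I ≤ S ≤ (η/(1-κ)) I` (Loewner). -/
theorem stmt0 {q n : ℕ} (hn : 0 < n) (x : Fin n → Fin q → ℝ)
    (u : ℝ → ℝ) (η κ : ℝ) (hη : 0 < η) (hκ : κ < 1)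
    (hu : ∀ s : ℝ, 0 ≤ s → 0 ≤ u s)
    (hψ : ∀ s : ℝ, 0 ≤ s → s * u s ≤ κ)
    (S : Matrix (Fin q) (Fin q) ℝ) (hS : S.PosDef)
    (heq : S = (n : ℝ)⁻¹ •
      (∑ i, u ((x i) ⬝ᵥ (S⁻¹ *ᵥ (x i))) • vecMulVec (x i) (x i)) + η • (1 : Matrix (Fin q) (Fin q) ℝ)) :
    (S - η • (1 : Matrix (Fin q) (Fin q) ℝ)).PosSemidef ∧
      ((η / (1 - κ)) • (1 : Matrix (Fin q) (Fin q) ℝ) - S).PosSemidef := by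
  set s : Fin n → ℝ := fun i => (x i) ⬝ᵥ (S⁻¹ *ᵥ (x i)) with hs
  have hsnn : ∀ i, 0 ≤ s i := by
    intro i
    have := hS.inv.posSemidef.dotProduct_mulVec_nonneg (x i)
    simpa using this
  have hherm1 : (η • (1 : Matrix (Fin q) (Fin q) ℝ)).IsHermitian := by
    simp [Matrix.IsHermitian]
  -- quadratic form identity
  have hq : ∀ v : Fin q → ℝ, v ⬝ᵥ S *ᵥ v
      = (n : ℝ)⁻¹ * (∑ i, u (s i) * (x i ⬝ᵥ v) ^ 2) + η * (v ⬝ᵥ v) := by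
    intro v
    conv_lhs => rw [heq]
    rw [add_mulVec, dotProduct_add, smul_mulVec, dotProduct_smul, smul_mulVec,
      dotProduct_smul, one_mulVec, sum_mulVec']
    have : ∀ i, (u (s i) • vecMulVec (x i) (x i)) *ᵥ v = (u (s i) * (x i ⬝ᵥ v)) • x i := by
      intro i
      rw [smul_mulVec, vecMulVec_mulVec', smul_smul]
    rw [dotProduct_sum']
    simp only [this, dotProduct_smul, smul_eq_mul]
    congr 1
    rw [mul_eq_mul_left_iff]
    left
    refine Finset.sum_congr rfl fun i _ => ?_
    rw [this i, dotProduct_smul, smul_eq_mul]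
    rw [dotProduct_comm (x i) v]
    ring
  have hvSv_nonneg : ∀ v : Fin q → ℝ, 0 ≤ v ⬝ᵥ S *ᵥ v := by
    intro v
    simpa using hS.posSemidef.dotProduct_mulVec_nonneg v
  constructor
  · refine PosSemidef.of_dotProduct_mulVec_nonneg (hS.1.sub hherm1) fun v => ?_
    rw [sub_mulVec, dotProduct_sub, star_trivial, sub_nonneg, hq v,
      smul_mulVec, dotProduct_smul, one_mulVec, smul_eq_mul]
    have : 0 ≤ (n : ℝ)⁻¹ * (∑ i, u (s i) * (x i ⬝ᵥ v) ^ 2) := by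
      apply mul_nonneg (by positivity)
      exact Finset.sum_nonneg fun i _ => mul_nonneg (hu _ (hsnn i)) (sq_nonneg _)
    linarith
  · have hherm2 : ((η / (1 - κ)) • (1 : Matrix (Fin q) (Fin q) ℝ)).IsHermitian := by
      simp [Matrix.IsHermitian]
    refine PosSemidef.of_dotProduct_mulVec_nonneg (hherm2.sub hS.1) fun v => ?_
    rw [sub_mulVec, dotProduct_sub, star_trivial, sub_nonneg,
      smul_mulVec, dotProduct_smul, one_mulVec, smul_eq_mul]
    have hterm : ∀ i, u (s i) * (x i ⬝ᵥ v) ^ 2 ≤ κ * (v ⬝ᵥ S *ᵥ v) := by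
      intro i
      have hcs := cs_aux2 hS (x i) v
      calc u (s i) * (x i ⬝ᵥ v) ^ 2 ≤ u (s i) * (s i * (v ⬝ᵥ S *ᵥ v)) :=
            mul_le_mul_of_nonneg_left (by simpa [hs] using hcs) (hu _ (hsnn i))
        _ = (s i * u (s i)) * (v ⬝ᵥ S *ᵥ v) := by ring
        _ ≤ κ * (v ⬝ᵥ S *ᵥ v) :=
            mul_le_mul_of_nonneg_right (hψ _ (hsnn i)) (hvSv_nonneg v)
    have hsum : (∑ i, u (s i) * (x i ⬝ᵥ v) ^ 2) ≤ n * (κ * (v ⬝ᵥ S *ᵥ v)) := by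
      calc (∑ i, u (s i) * (x i ⬝ᵥ v) ^ 2) ≤ ∑ _i : Fin n, κ * (v ⬝ᵥ S *ᵥ v) :=
            Finset.sum_le_sum fun i _ => hterm i
        _ = n * (κ * (v ⬝ᵥ S *ᵥ v)) := by simp [Finset.sum_const, nsmul_eq_mul]
    have hn' : (0:ℝ) < n := by exact_mod_cast hn
    have hkey : v ⬝ᵥ S *ᵥ v ≤ κ * (v ⬝ᵥ S *ᵥ v) + η * (v ⬝ᵥ v) := by
      have hqv := hq v
      have : (n : ℝ)⁻¹ * (∑ i, u (s i) * (x i ⬝ᵥ v) ^ 2) ≤ κ * (v ⬝ᵥ S *ᵥ v) := by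
        rw [inv_mul_le_iff₀ hn']
        linarith [hsum]
      linarith
    have h1κ : 0 < 1 - κ := by linarith
    rw [div_mul_eq_mul_div, le_div_iff₀ h1κ]
    nlinarith [hkey]
end

section
/- Let V be a positive definite solution of V = (1/n)∑ᵢ u(xᵢᵀ(V + ηI_q)⁻¹xᵢ) xᵢxᵢᵀ with η > 0 and u nonincreasing. If λ_q denotes the smallest eigenvalue of V, then V ≥ ((λ_q+η)/n) ∑ᵢ ψ(xᵢᵀxᵢ/(λ_q+η)) xᵢxᵢᵀ/(xᵢᵀxᵢ) in the Loewner order, where ψ(s)=s·u(s). -/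
open Matrix BigOperators

lemma aux_smul_vecMulVec_psd {q : ℕ} (x : Fin q → ℝ) {c : ℝ} (hc : 0 ≤ c) :
    (c • vecMulVec x x).PosSemidef := by
  refine Matrix.posSemidef_iff_dotProduct_mulVec.mpr ⟨?_, ?_⟩
  · ext i j
    simp [vecMulVec_apply, conjTranspose_apply, mul_comm]
  · intro z
    have h : (c • vecMulVec x x) *ᵥ z = (c * (x ⬝ᵥ z)) • x := by
      ext i
      simp [vecMulVec_apply, mulVec, dotProduct, Finset.mul_sum, mul_assoc, mul_comm, mul_left_comm]
    rw [h]
    simp only [star_trivial, dotProduct_smul, smul_eq_mul]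
    rw [dotProduct_comm, mul_assoc]
    exact mul_nonneg hc (mul_self_nonneg _)


lemma aux_key {q : ℕ} {V : Matrix (Fin q) (Fin q) ℝ} (hq : 0 < q) (hV : V.PosDef) {η : ℝ} (hη : 0 < η)
    (z : Fin q → ℝ) :
    0 ≤ z ⬝ᵥ ((V + η • 1)⁻¹ *ᵥ z) ∧
    z ⬝ᵥ ((V + η • 1)⁻¹ *ᵥ z) ≤ (z ⬝ᵥ z) / ((⨅ j, hV.isHermitian.eigenvalues j) + η) := by
  classical
  have : Nonempty (Fin q) := ⟨⟨0, hq⟩⟩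
  set lam := ⨅ j, hV.isHermitian.eigenvalues j with hlam
  set μ := lam + η with hμdef
  have hDpos : ∀ j, 0 < hV.isHermitian.eigenvalues j := hV.eigenvalues_pos
  have hlam_nonneg : 0 ≤ lam := le_ciInf fun j => (hDpos j).le
  have hμ : 0 < μ := by positivity
  have hlam_le : ∀ j, lam ≤ hV.isHermitian.eigenvalues j :=
    fun j => ciInf_le (Finite.bddBelow_range _) j
  set U : Matrix (Fin q) (Fin q) ℝ := (hV.isHermitian.eigenvectorUnitary : Matrix (Fin q) (Fin q) ℝ) with hU
  have hUU : U * star U = 1 := (Matrix.mem_unitaryGroup_iff).mp hV.isHermitian.eigenvectorUnitary.2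
  have hUU' : star U * U = 1 := (Matrix.mem_unitaryGroup_iff').mp hV.isHermitian.eigenvectorUnitary.2
  have hspec : V = U * diagonal (fun j => hV.isHermitian.eigenvalues j) * star U := by
    have := hV.isHermitian.spectral_theorem
    simpa using this
  set W := V + η • (1 : Matrix (Fin q) (Fin q) ℝ) with hWdef
  have h1 : η • (1 : Matrix (Fin q) (Fin q) ℝ) = U * (η • 1) * star U := by
    rw [Matrix.mul_smul, mul_one, Matrix.smul_mul, hUU]
  have hdiagadd : diagonal (fun j => hV.isHermitian.eigenvalues j) + η • (1 : Matrix (Fin q) (Fin q) ℝ)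
      = diagonal (fun j => hV.isHermitian.eigenvalues j + η) := by
    ext i j
    by_cases hij : i = j <;> simp [diagonal_apply, one_apply, hij]
  have hWspec : W = U * diagonal (fun j => hV.isHermitian.eigenvalues j + η) * star U := by
    rw [hWdef, ← hdiagadd, mul_add, add_mul, ← h1, ← hspec]
  have hWinv : W⁻¹ = U * diagonal (fun j => (hV.isHermitian.eigenvalues j + η)⁻¹) * star U := by
    apply inv_eq_right_inv
    rw [hWspec]
    simp only [mul_assoc]
    rw [← mul_assoc (star U) U, hUU', one_mul, ← mul_assoc (diagonal _), diagonal_mul_diagonal]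
    have : (fun j => (hV.isHermitian.eigenvalues j + η) * (hV.isHermitian.eigenvalues j + η)⁻¹)
        = fun _ => (1:ℝ) := by
      ext j; exact mul_inv_cancel₀ (by have := hDpos j; positivity)
    rw [this, diagonal_one, one_mul, hUU]
  have hWinv_psd : W⁻¹.PosSemidef := by
    rw [hWinv]
    have hd : (Matrix.diagonal fun j => (hV.isHermitian.eigenvalues j + η)⁻¹).PosSemidef :=
      Matrix.PosSemidef.diagonal fun j => by have := hDpos j; positivity
    simpa [Matrix.star_eq_conjTranspose] using hd.mul_mul_conjTranspose_same U
  have hM_psd : (μ⁻¹ • (1 : Matrix (Fin q) (Fin q) ℝ) - W⁻¹).PosSemidef := by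
    have heq2 : μ⁻¹ • (1 : Matrix (Fin q) (Fin q) ℝ) - W⁻¹
        = U * diagonal (fun j => μ⁻¹ - (hV.isHermitian.eigenvalues j + η)⁻¹) * star U := by
      have h2 : μ⁻¹ • (1 : Matrix (Fin q) (Fin q) ℝ) = U * (μ⁻¹ • diagonal (fun _ => (1:ℝ))) * star U := by
        rw [diagonal_one, Matrix.mul_smul, mul_one, Matrix.smul_mul, hUU]
      have hd3 : μ⁻¹ • diagonal (fun _ : Fin q => (1:ℝ)) - diagonal (fun j => (hV.isHermitian.eigenvalues j + η)⁻¹)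
          = diagonal (fun j => μ⁻¹ - (hV.isHermitian.eigenvalues j + η)⁻¹) := by
        ext i j
        by_cases hij : i = j <;> simp [diagonal_apply, hij]
      rw [h2, hWinv, ← sub_mul, ← mul_sub, hd3]
    rw [heq2]
    have hd : (Matrix.diagonal fun j => μ⁻¹ - (hV.isHermitian.eigenvalues j + η)⁻¹).PosSemidef := by
      apply Matrix.PosSemidef.diagonal
      rw [Pi.le_def]
      intro j
      simp only [Pi.zero_apply]
      have h3 : μ ≤ hV.isHermitian.eigenvalues j + η := by
        have := hlam_le j; rw [hμdef]; linarith
      have := inv_anti₀ hμ h3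
      linarith
    simpa [Matrix.star_eq_conjTranspose] using hd.mul_mul_conjTranspose_same U
  constructor
  · have := hWinv_psd.dotProduct_mulVec_nonneg z
    simpa using this
  · have h0 := hM_psd.dotProduct_mulVec_nonneg z
    simp only [star_trivial, sub_mulVec, dotProduct_sub, smul_mulVec, one_mulVec,
      dotProduct_smul, smul_eq_mul, sub_nonneg] at h0
    rw [div_eq_inv_mul]
    exact h0


/-- If `V > 0` solves `V = (1/n) ∑ᵢ u(xᵢᵀ(V+ηI)⁻¹xᵢ) xᵢxᵢᵀ` with `η > 0` and
`u` nonincreasing, and `λq` is the smallest eigenvalue of `V`, then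
`V ≥ ((λq+η)/n) ∑ᵢ ψ(xᵢᵀxᵢ/(λq+η)) xᵢxᵢᵀ/(xᵢᵀxᵢ)` in the Loewner order, where `ψ(s)=s·u(s)`. -/
theorem stmt2 {q n : ℕ} (hq : 0 < q) (hn : 0 < n) (x : Fin n → Fin q → ℝ)
    (hx : ∀ i, x i ≠ 0)
    (u : ℝ → ℝ) (η : ℝ) (hη : 0 < η)
    (hu_pos : ∀ s : ℝ, 0 ≤ s → 0 < u s)
    (hu_mono : ∀ s t : ℝ, 0 ≤ s → s ≤ t → u t ≤ u s)
    (V : Matrix (Fin q) (Fin q) ℝ) (hV : V.PosDef)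
    (heq : V = (n : ℝ)⁻¹ •
      (∑ i, u ((x i) ⬝ᵥ ((V + η • (1 : Matrix (Fin q) (Fin q) ℝ))⁻¹ *ᵥ (x i))) •
        vecMulVec (x i) (x i))) :
    (V - (((⨅ j, hV.isHermitian.eigenvalues j) + η) / (n : ℝ)) •
      (∑ i, (((x i ⬝ᵥ x i) / ((⨅ j, hV.isHermitian.eigenvalues j) + η)) *
          u ((x i ⬝ᵥ x i) / ((⨅ j, hV.isHermitian.eigenvalues j) + η)) / (x i ⬝ᵥ x i)) •
        vecMulVec (x i) (x i))).PosSemidef := by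
  classical
  have hqne : Nonempty (Fin q) := ⟨⟨0, hq⟩⟩
  set lam := ⨅ j, hV.isHermitian.eigenvalues j with hlam
  have hDpos : ∀ j, 0 < hV.isHermitian.eigenvalues j := hV.eigenvalues_pos
  have hlam_nonneg : 0 ≤ lam := le_ciInf fun j => (hDpos j).le
  have hμ : 0 < lam + η := by positivity
  have hnn : (0:ℝ) < n := by exact_mod_cast hn
  have hd : ∀ i, 0 < x i ⬝ᵥ x i := by
    intro i
    have h0 : (0:ℝ) ≤ x i ⬝ᵥ x i := Finset.sum_nonneg fun j _ => mul_self_nonneg _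
    rcases h0.lt_or_eq with h | h
    · exact h
    · exact absurd (dotProduct_self_eq_zero.mp h.symm) (hx i)
  have hkey : ∀ i, 0 ≤ x i ⬝ᵥ ((V + η • (1 : Matrix (Fin q) (Fin q) ℝ))⁻¹ *ᵥ x i) ∧
      x i ⬝ᵥ ((V + η • (1 : Matrix (Fin q) (Fin q) ℝ))⁻¹ *ᵥ x i) ≤ (x i ⬝ᵥ x i) / (lam + η) := by
    intro i
    exact aux_key hq hV hη (x i)
  have hub : ∀ i, u ((x i ⬝ᵥ x i) / (lam + η))
      ≤ u (x i ⬝ᵥ ((V + η • (1 : Matrix (Fin q) (Fin q) ℝ))⁻¹ *ᵥ x i)) :=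
    fun i => hu_mono _ _ (hkey i).1 (hkey i).2
  obtain ⟨c, hc, heqc⟩ : ∃ c : Fin n → ℝ, (∀ i, u ((x i ⬝ᵥ x i) / (lam + η)) ≤ c i) ∧
      V = (n : ℝ)⁻¹ • ∑ i, c i • vecMulVec (x i) (x i) := ⟨_, hub, heq⟩
  have hmain : V - ((lam + η) / (n : ℝ)) •
      (∑ i, (((x i ⬝ᵥ x i) / (lam + η)) * u ((x i ⬝ᵥ x i) / (lam + η)) / (x i ⬝ᵥ x i)) •
        vecMulVec (x i) (x i))
      = ∑ i, ((c i - u ((x i ⬝ᵥ x i) / (lam + η))) / (n : ℝ)) • vecMulVec (x i) (x i) := by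
    rw [heqc, Finset.smul_sum, Finset.smul_sum, ← Finset.sum_sub_distrib]
    apply Finset.sum_congr rfl
    intro i _
    rw [smul_smul, smul_smul, ← sub_smul]
    congr 1
    have hdi := (hd i).ne'
    generalize u ((x i ⬝ᵥ x i) / (lam + η)) = b
    field_simp
  rw [hmain]
  apply Finset.sum_induction _ (fun A : Matrix (Fin q) (Fin q) ℝ => A.PosSemidef)
    (fun A B ha hb => ha.add hb) Matrix.PosSemidef.zero
  intro i _
  apply aux_smul_vecMulVec_psd
  apply div_nonneg _ hnn.le
  rw [sub_nonneg]
  exact hc i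
end

section
/- Suppose ψ : ℝ≥0 → ℝ≥0 defined by ψ(s) = s·u(s) is nondecreasing and u is nonincreasing with u > 0. Fix nonnegative reals s and z₁², z₂² ≥ 0 and β > β' > 0. Then u(β z₁² + β' z₂² + s)·β z₁² ≥ u(β' z₁² + β' z₂² + s)·β' z₁² ≥ u(β' z₁² + β z₂² + s)·β' z₁². -/
open Set

theorem mul_apply_add_le_mul_apply_add {α : Type*} [CommRing α] [LinearOrder α]
    [IsStrictOrderedRing α] {u : α → α} (hu : AntitoneOn u (Ici 0))
    (hψ : MonotoneOn (fun t => t * u t) (Ici 0)) {a b c : α} (ha : 0 ≤ a) (hab : a ≤ b)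
    (hc : 0 ≤ c) : a * u (a + c) ≤ b * u (b + c) := by
  have hac : (0 : α) ≤ a + c := add_nonneg ha hc
  have hacb : a + c ≤ b + c := add_le_add_left hab c
  have hψ_le : (a + c) * u (a + c) ≤ (b + c) * u (b + c) :=
    hψ hac (hac.trans hacb) hacb
  have hu_le : c * u (b + c) ≤ c * u (a + c) :=
    mul_le_mul_of_nonneg_left (hu hac (hac.trans hacb) hacb) hc
  calc a * u (a + c) = (a + c) * u (a + c) - c * u (a + c) := by ring
    _ ≤ (b + c) * u (b + c) - c * u (b + c) := sub_le_sub hψ_le hu_le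
    _ = b * u (b + c) := by ring

theorem stmt6_general (u : ℝ → ℝ)
    (hu_mono : ∀ s t : ℝ, 0 ≤ s → s ≤ t → u t ≤ u s)
    (hψ : ∀ s t : ℝ, 0 ≤ s → s ≤ t → s * u s ≤ t * u t)
    (β β' s : ℝ) (hβ : β > β') (hβ' : β' > 0) (hs : 0 ≤ s) (z₁ z₂ : ℝ) :
    u (β' * z₁ ^ 2 + β' * z₂ ^ 2 + s) * (β' * z₁ ^ 2) ≤
        u (β * z₁ ^ 2 + β' * z₂ ^ 2 + s) * (β * z₁ ^ 2) ∧
      u (β' * z₁ ^ 2 + β * z₂ ^ 2 + s) * (β' * z₁ ^ 2) ≤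
        u (β' * z₁ ^ 2 + β' * z₂ ^ 2 + s) * (β' * z₁ ^ 2) := by
  have hβz₁ : β' * z₁ ^ 2 ≤ β * z₁ ^ 2 := mul_le_mul_of_nonneg_right hβ.le (sq_nonneg z₁)
  have hβz₂ : β' * z₂ ^ 2 ≤ β * z₂ ^ 2 := mul_le_mul_of_nonneg_right hβ.le (sq_nonneg z₂)
  have hβ'z₁ : 0 ≤ β' * z₁ ^ 2 := by positivity
  have hβ'z₂ : 0 ≤ β' * z₂ ^ 2 := by positivity
  constructor
  · have key := mul_apply_add_le_mul_apply_add (fun x hx y _ hxy => hu_mono x y hx hxy)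
      (fun x hx y _ hxy => hψ x y hx hxy) hβ'z₁ hβz₁ (add_nonneg hβ'z₂ hs)
    simpa only [← add_assoc, mul_comm (u _)] using key
  · exact mul_le_mul_of_nonneg_right (hu_mono _ _ (by positivity) (by linarith)) hβ'z₁

/-- If `ψ(s) = s·u(s)` is nondecreasing and `u > 0` is nonincreasing, then for
`β > β' > 0`, `s ≥ 0` and reals `z₁, z₂`:
`u(β z₁² + β' z₂² + s)·β z₁² ≥ u(β' z₁² + β' z₂² + s)·β' z₁² ≥ u(β' z₁² + β z₂² + s)·β' z₁²`. -/
theorem stmt6 (u : ℝ → ℝ)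
    (hu_pos : ∀ s : ℝ, 0 ≤ s → 0 < u s)
    (hu_mono : ∀ s t : ℝ, 0 ≤ s → s ≤ t → u t ≤ u s)
    (hψ : ∀ s t : ℝ, 0 ≤ s → s ≤ t → s * u s ≤ t * u t)
    (β β' s : ℝ) (hβ : β > β') (hβ' : β' > 0) (hs : 0 ≤ s) (z₁ z₂ : ℝ) :
    u (β' * z₁ ^ 2 + β' * z₂ ^ 2 + s) * (β' * z₁ ^ 2) ≤
        u (β * z₁ ^ 2 + β' * z₂ ^ 2 + s) * (β * z₁ ^ 2) ∧
      u (β' * z₁ ^ 2 + β * z₂ ^ 2 + s) * (β' * z₁ ^ 2) ≤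
        u (β' * z₁ ^ 2 + β' * z₂ ^ 2 + s) * (β' * z₁ ^ 2) :=
  stmt6_general u hu_mono hψ β β' s hβ hβ' hs z₁ z₂
end

section
/- Let Z = (Z₁,…,Z_q) be an exchangeable random vector (its law is invariant under coordinate permutations) and let u : ℝ≥0 → ℝ≥0 be measurable. Fix positive reals β₁,…,β_q with βᵢ > β_{i+1} for some index i, assume u > 0 is nonincreasing and s ↦ s·u(s) is strictly increasing. Then E[u(∑ₖ βₖZₖ²) βᵢZᵢ²] ≥ E[u(∑ₖ βₖZₖ²) β_{i+1}Z_{i+1}²], with strict inequality if P(Zᵢ ≠ 0) > 0; i.e., larger weights βᵢ give larger weighted moments αᵢ. -/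
open MeasureTheory BigOperators


private lemma key_half (v : ℝ → ℝ)
    (hv_pos : ∀ s : ℝ, 0 ≤ s → 0 < v s)
    (hψ : ∀ s t : ℝ, 0 ≤ s → s < t → s * v s < t * v t)
    {bi bj : ℝ} (hbj : 0 < bj) (hbij : bj < bi)
    {a b R : ℝ} (ha : 0 ≤ a) (hb : 0 ≤ b) (hR : 0 ≤ R) (hba : b ≤ a) (ha0 : 0 < a) :
    0 < v (bi * a + bj * b + R) * (bi * a - bj * b)
        + v (bi * b + bj * a + R) * (bi * b - bj * a) := by
  have hbi : 0 < bi := hbj.trans hbij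
  have hS2 : 0 ≤ bi * b + bj * a + R := by
    nlinarith [mul_nonneg hbi.le hb, mul_nonneg hbj.le ha]
  have hS : 0 ≤ bi * a + bj * b + R := by
    nlinarith [mul_nonneg hbi.le ha, mul_nonneg hbj.le hb]
  have huS : 0 < v (bi * a + bj * b + R) := hv_pos _ hS
  have huS2 : 0 < v (bi * b + bj * a + R) := hv_pos _ hS2
  have hc : 0 < bi * a - bj * b := by nlinarith
  rcases le_or_gt (bj * a - bi * b) 0 with hd | hd
  · nlinarith [mul_pos huS hc, mul_nonneg huS2.le (by linarith : (0:ℝ) ≤ bi * b - bj * a)]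
  · have hba' : 0 < bj * a := by nlinarith [mul_nonneg hbi.le hb]
    have hS2pos : 0 < bi * b + bj * a + R := by nlinarith [mul_nonneg hbi.le hb]
    have h5 : bi * b < bi * a := by nlinarith [mul_lt_mul_of_pos_right hbij ha0]
    have hab : b < a := lt_of_mul_lt_mul_left h5 hbi.le
    have hSS : bi * b + bj * a + R < bi * a + bj * b + R := by
      nlinarith [mul_pos (sub_pos.mpr hbij) (sub_pos.mpr hab)]
    have hψ' := hψ _ _ hS2 hSS
    have hcd : (bj * a - bi * b) * (bi * a + bj * b + R)
        ≤ (bi * a - bj * b) * (bi * b + bj * a + R) := by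
      nlinarith [mul_nonneg ha hb, mul_nonneg hR (add_nonneg ha hb),
        mul_nonneg (mul_nonneg (sub_pos.mpr hbij).le (add_pos hbj hbi).le) (mul_nonneg ha hb),
        mul_nonneg (mul_nonneg hR (sub_pos.mpr hbij).le) (add_nonneg ha hb)]
    nlinarith [mul_le_mul_of_nonneg_left hcd huS.le, mul_lt_mul_of_pos_left hψ' hd,
      hS2pos, huS2, huS]

private lemma key_full (v : ℝ → ℝ)
    (hv_pos : ∀ s : ℝ, 0 ≤ s → 0 < v s)
    (hψ : ∀ s t : ℝ, 0 ≤ s → s < t → s * v s < t * v t)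
    {bi bj : ℝ} (hbj : 0 < bj) (hbij : bj < bi)
    {a b R : ℝ} (ha : 0 ≤ a) (hb : 0 ≤ b) (hR : 0 ≤ R) :
    0 ≤ v (bi * a + bj * b + R) * (bi * a - bj * b)
        + v (bi * b + bj * a + R) * (bi * b - bj * a) ∧
    (0 < a → 0 < v (bi * a + bj * b + R) * (bi * a - bj * b)
        + v (bi * b + bj * a + R) * (bi * b - bj * a)) := by
  rcases le_total b a with h | h
  · constructor
    · rcases eq_or_lt_of_le ha with h0 | h0
      · have hb0 : b = 0 := le_antisymm (h.trans h0.symm.le) hb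
        rw [← h0, hb0]; ring_nf; rfl
      · exact (key_half v hv_pos hψ hbj hbij ha hb hR h h0).le
    · exact fun h0 => key_half v hv_pos hψ hbj hbij ha hb hR h h0
  · have hswap : ∀ h0 : 0 < b,
        0 < v (bi * a + bj * b + R) * (bi * a - bj * b)
          + v (bi * b + bj * a + R) * (bi * b - bj * a) := by
      intro h0
      have := key_half v hv_pos hψ hbj hbij hb ha hR h h0
      linarith
    constructor
    · rcases eq_or_lt_of_le hb with h0 | h0
      · have ha0 : a = 0 := le_antisymm (h.trans h0.symm.le) ha
        rw [← h0, ha0]; ring_nf; rfl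
      · exact (hswap h0).le
    · exact fun h0 => hswap (lt_of_lt_of_le h0 h)

/-- For an exchangeable random vector `Z`, `u > 0` nonincreasing with `s·u(s)`
strictly increasing, and weights `β` with `β i > β j`, one has
`E[u(∑ₖ βₖZₖ²) βᵢZᵢ²] ≥ E[u(∑ₖ βₖZₖ²) βⱼZⱼ²]`, strictly if `P(Zᵢ ≠ 0) > 0`. -/
theorem stmt7 {Ω : Type*} [MeasurableSpace Ω] (μ : Measure Ω) [IsProbabilityMeasure μ]
    {q : ℕ} (Z : Ω → (Fin q → ℝ)) (hZ : Measurable Z)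
    (hexch : ∀ σ : Equiv.Perm (Fin q),
      Measure.map (fun ω => (Z ω) ∘ σ) μ = Measure.map Z μ)
    (u : ℝ → ℝ)
    (hu_pos : ∀ s : ℝ, 0 ≤ s → 0 < u s)
    (hu_mono : ∀ s t : ℝ, 0 ≤ s → s ≤ t → u t ≤ u s)
    (hψ : ∀ s t : ℝ, 0 ≤ s → s < t → s * u s < t * u t)
    (β : Fin q → ℝ) (hβ : ∀ k, 0 < β k)
    (i j : Fin q) (hij : i ≠ j) (hβij : β i > β j)
    (hint : ∀ k : Fin q,
      Integrable (fun ω => u (∑ k', β k' * (Z ω k') ^ 2) * (β k * (Z ω k) ^ 2)) μ) :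
    (∫ ω, u (∑ k', β k' * (Z ω k') ^ 2) * (β j * (Z ω j) ^ 2) ∂μ) ≤
      (∫ ω, u (∑ k', β k' * (Z ω k') ^ 2) * (β i * (Z ω i) ^ 2) ∂μ) ∧
    (0 < μ {ω | Z ω i ≠ 0} →
      (∫ ω, u (∑ k', β k' * (Z ω k') ^ 2) * (β j * (Z ω j) ^ 2) ∂μ) <
        (∫ ω, u (∑ k', β k' * (Z ω k') ^ 2) * (β i * (Z ω i) ^ 2) ∂μ)) := by
  classical
  set σ : Equiv.Perm (Fin q) := Equiv.swap i j with hσdef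
  have hσi : σ i = j := Equiv.swap_apply_left i j
  have hσj : σ j = i := Equiv.swap_apply_right i j
  have hσσ : ∀ m, σ (σ m) = m := fun m => Equiv.swap_apply_self i j m
  have hσne : ∀ m, m ≠ i → m ≠ j → σ m = m := fun m h1 h2 =>
    Equiv.swap_apply_of_ne_of_ne h1 h2
  -- the truncated u
  set v : ℝ → ℝ := fun s => u (max s 0) with hvdef
  have hv_anti : Antitone v := fun s t hst =>
    hu_mono (max s 0) (max t 0) (le_max_right s 0) (max_le_max hst le_rfl)
  have hv_meas : Measurable v := hv_anti.measurable
  have hv_eq : ∀ s : ℝ, 0 ≤ s → v s = u s := fun s hs => by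
    simp only [hvdef, max_eq_left hs]
  have hv_pos : ∀ s : ℝ, 0 ≤ s → 0 < v s := fun s hs => by
    rw [hv_eq s hs]; exact hu_pos s hs
  have hv_ψ : ∀ s t : ℝ, 0 ≤ s → s < t → s * v s < t * v t := fun s t hs hst => by
    rw [hv_eq s hs, hv_eq t (hs.trans hst.le)]; exact hψ s t hs hst
  have hsum_nonneg : ∀ x : Fin q → ℝ, (0:ℝ) ≤ ∑ m, β m * (x m) ^ 2 := fun x =>
    Finset.sum_nonneg fun m _ => mul_nonneg (hβ m).le (sq_nonneg _)
  have hsum'_nonneg : ∀ ω, (0:ℝ) ≤ ∑ m, β (σ m) * (Z ω m) ^ 2 := fun ω =>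
    Finset.sum_nonneg fun m _ => mul_nonneg (hβ (σ m)).le (sq_nonneg _)
  -- rewrite goal in terms of v
  have hgi : (∫ ω, u (∑ k', β k' * (Z ω k') ^ 2) * (β i * (Z ω i) ^ 2) ∂μ)
      = ∫ ω, v (∑ k', β k' * (Z ω k') ^ 2) * (β i * (Z ω i) ^ 2) ∂μ :=
    integral_congr_ae (.of_forall fun ω =>
      (congrArg (· * (β i * (Z ω i) ^ 2)) (hv_eq _ (hsum_nonneg (Z ω)))).symm)
  have hgj : (∫ ω, u (∑ k', β k' * (Z ω k') ^ 2) * (β j * (Z ω j) ^ 2) ∂μ)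
      = ∫ ω, v (∑ k', β k' * (Z ω k') ^ 2) * (β j * (Z ω j) ^ 2) ∂μ :=
    integral_congr_ae (.of_forall fun ω =>
      (congrArg (· * (β j * (Z ω j) ^ 2)) (hv_eq _ (hsum_nonneg (Z ω)))).symm)
  rw [hgi, hgj]
  have hint_v : ∀ k : Fin q,
      Integrable (fun ω => v (∑ k', β k' * (Z ω k') ^ 2) * (β k * (Z ω k) ^ 2)) μ :=
    fun k => (hint k).congr (.of_forall fun ω =>
      (congrArg (· * (β k * (Z ω k) ^ 2)) (hv_eq _ (hsum_nonneg (Z ω)))).symm)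
  -- measurability pieces
  have hsum_meas : Measurable (fun x : Fin q → ℝ => ∑ m, β m * (x m) ^ 2) :=
    Finset.measurable_sum _ fun m _ => by fun_prop
  have hf_meas : ∀ k : Fin q,
      Measurable (fun x : Fin q → ℝ => v (∑ m, β m * (x m) ^ 2) * (β k * (x k) ^ 2)) :=
    fun k => (hv_meas.comp hsum_meas).mul
      (by fun_prop)
  have hZσ : Measurable (fun ω => Z ω ∘ σ) :=
    measurable_pi_lambda _ fun m => (measurable_pi_apply (σ m)).comp hZ
  -- sum reindexing
  have hS'eq : ∀ ω, ∑ m, β m * (Z ω (σ m)) ^ 2 = ∑ m, β (σ m) * (Z ω m) ^ 2 := by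
    intro ω
    have := Equiv.sum_comp σ (fun m => β (σ m) * (Z ω m) ^ 2)
    simpa only [hσσ] using this
  -- exchangeability: transport integrals
  have hmap : ∀ k : Fin q,
      (∫ ω, v (∑ m, β m * (Z ω m) ^ 2) * (β k * (Z ω k) ^ 2) ∂μ)
        = ∫ ω, v (∑ m, β m * (Z ω (σ m)) ^ 2) * (β k * (Z ω (σ k)) ^ 2) ∂μ := by
    intro k
    have h1 := integral_map (φ := Z) (μ := μ)
      (f := fun x : Fin q → ℝ => v (∑ m, β m * (x m) ^ 2) * (β k * (x k) ^ 2))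
      hZ.aemeasurable (hf_meas k).aestronglyMeasurable
    have h2 := integral_map (φ := fun ω => Z ω ∘ σ) (μ := μ)
      (f := fun x : Fin q → ℝ => v (∑ m, β m * (x m) ^ 2) * (β k * (x k) ^ 2))
      hZσ.aemeasurable (hf_meas k).aestronglyMeasurable
    simp only [Function.comp_apply] at h1 h2
    rw [hexch σ] at h2
    rw [← h1, ← h2]
  have hintσ : ∀ k : Fin q,
      Integrable (fun ω => v (∑ m, β m * (Z ω (σ m)) ^ 2) * (β k * (Z ω (σ k)) ^ 2)) μ := by
    intro k
    have h1 : Integrable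
        (fun x : Fin q → ℝ => v (∑ m, β m * (x m) ^ 2) * (β k * (x k) ^ 2))
        (Measure.map Z μ) :=
      (integrable_map_measure (hf_meas k).aestronglyMeasurable hZ.aemeasurable).mpr (hint_v k)
    rw [← hexch σ] at h1
    exact (integrable_map_measure (hf_meas k).aestronglyMeasurable hZσ.aemeasurable).mp h1
  -- the four integrable functions
  have hg1 : Integrable (fun ω => v (∑ m, β m * (Z ω m) ^ 2) * (β i * (Z ω i) ^ 2)) μ :=
    hint_v i
  have hg2 : Integrable (fun ω => v (∑ m, β m * (Z ω m) ^ 2) * (β j * (Z ω j) ^ 2)) μ :=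
    hint_v j
  have hg3 : Integrable (fun ω => v (∑ m, β (σ m) * (Z ω m) ^ 2) * (β i * (Z ω j) ^ 2)) μ :=
    (hintσ i).congr (.of_forall fun ω => by
      show v (∑ m, β m * (Z ω (σ m)) ^ 2) * (β i * (Z ω (σ i)) ^ 2)
        = v (∑ m, β (σ m) * (Z ω m) ^ 2) * (β i * (Z ω j) ^ 2)
      rw [hS'eq ω, hσi])
  have hg4 : Integrable (fun ω => v (∑ m, β (σ m) * (Z ω m) ^ 2) * (β j * (Z ω i) ^ 2)) μ :=
    (hintσ j).congr (.of_forall fun ω => by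
      show v (∑ m, β m * (Z ω (σ m)) ^ 2) * (β j * (Z ω (σ j)) ^ 2)
        = v (∑ m, β (σ m) * (Z ω m) ^ 2) * (β j * (Z ω i) ^ 2)
      rw [hS'eq ω, hσj])
  have hI1 : (∫ ω, v (∑ m, β m * (Z ω m) ^ 2) * (β i * (Z ω i) ^ 2) ∂μ)
      = ∫ ω, v (∑ m, β (σ m) * (Z ω m) ^ 2) * (β i * (Z ω j) ^ 2) ∂μ := by
    rw [hmap i]
    exact integral_congr_ae (.of_forall fun ω => by
      show v (∑ m, β m * (Z ω (σ m)) ^ 2) * (β i * (Z ω (σ i)) ^ 2)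
        = v (∑ m, β (σ m) * (Z ω m) ^ 2) * (β i * (Z ω j) ^ 2)
      rw [hS'eq ω, hσi])
  have hI2 : (∫ ω, v (∑ m, β m * (Z ω m) ^ 2) * (β j * (Z ω j) ^ 2) ∂μ)
      = ∫ ω, v (∑ m, β (σ m) * (Z ω m) ^ 2) * (β j * (Z ω i) ^ 2) ∂μ := by
    rw [hmap j]
    exact integral_congr_ae (.of_forall fun ω => by
      show v (∑ m, β m * (Z ω (σ m)) ^ 2) * (β j * (Z ω (σ j)) ^ 2)
        = v (∑ m, β (σ m) * (Z ω m) ^ 2) * (β j * (Z ω i) ^ 2)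
      rw [hS'eq ω, hσj])
  -- splitting the sums
  have hjmem : j ∈ Finset.univ.erase i := Finset.mem_erase.mpr ⟨hij.symm, Finset.mem_univ j⟩
  have hsplit1 : ∀ ω, ∑ m, β m * (Z ω m) ^ 2
      = β i * (Z ω i) ^ 2 + β j * (Z ω j) ^ 2
        + ∑ m ∈ (Finset.univ.erase i).erase j, β m * (Z ω m) ^ 2 := by
    intro ω
    rw [← Finset.add_sum_erase _ _ (Finset.mem_univ i),
        ← Finset.add_sum_erase _ _ hjmem]
    ring
  have hsplit2 : ∀ ω, ∑ m, β (σ m) * (Z ω m) ^ 2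
      = β i * (Z ω j) ^ 2 + β j * (Z ω i) ^ 2
        + ∑ m ∈ (Finset.univ.erase i).erase j, β m * (Z ω m) ^ 2 := by
    intro ω
    rw [← Finset.add_sum_erase _ (fun m => β (σ m) * (Z ω m) ^ 2) (Finset.mem_univ i),
        ← Finset.add_sum_erase _ _ hjmem, hσi, hσj]
    have : ∑ m ∈ (Finset.univ.erase i).erase j, β (σ m) * (Z ω m) ^ 2
        = ∑ m ∈ (Finset.univ.erase i).erase j, β m * (Z ω m) ^ 2 :=
      Finset.sum_congr rfl fun m hm => by
        rw [hσne m (Finset.mem_erase.mp (Finset.mem_erase.mp hm).2).1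
          (Finset.mem_erase.mp hm).1]
    rw [this]; ring
  have hR_nonneg : ∀ ω, (0:ℝ) ≤ ∑ m ∈ (Finset.univ.erase i).erase j, β m * (Z ω m) ^ 2 :=
    fun ω => Finset.sum_nonneg fun m _ => mul_nonneg (hβ m).le (sq_nonneg _)
  -- pointwise key inequality
  have hkey : ∀ ω,
      (0 ≤ v (∑ m, β m * (Z ω m) ^ 2) * (β i * (Z ω i) ^ 2 - β j * (Z ω j) ^ 2)
        + v (∑ m, β (σ m) * (Z ω m) ^ 2) * (β i * (Z ω j) ^ 2 - β j * (Z ω i) ^ 2)) ∧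
      (Z ω i ≠ 0 →
        0 < v (∑ m, β m * (Z ω m) ^ 2) * (β i * (Z ω i) ^ 2 - β j * (Z ω j) ^ 2)
        + v (∑ m, β (σ m) * (Z ω m) ^ 2) * (β i * (Z ω j) ^ 2 - β j * (Z ω i) ^ 2)) := by
    intro ω
    have hk := key_full v hv_pos hv_ψ (hβ j) hβij (sq_nonneg (Z ω i)) (sq_nonneg (Z ω j))
      (hR_nonneg ω)
    rw [← hsplit1 ω, ← hsplit2 ω] at hk
    refine ⟨hk.1, fun hz => hk.2 ?_⟩
    exact lt_of_le_of_ne (sq_nonneg _) (Ne.symm (pow_ne_zero 2 hz))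
  have h12 : Integrable (fun ω =>
      v (∑ m, β m * (Z ω m) ^ 2) * (β i * (Z ω i) ^ 2)
        - v (∑ m, β m * (Z ω m) ^ 2) * (β j * (Z ω j) ^ 2)) μ := hg1.sub hg2
  have h34 : Integrable (fun ω =>
      v (∑ m, β (σ m) * (Z ω m) ^ 2) * (β i * (Z ω j) ^ 2)
        - v (∑ m, β (σ m) * (Z ω m) ^ 2) * (β j * (Z ω i) ^ 2)) μ := hg3.sub hg4
  have h1234 : Integrable (fun ω =>
      (v (∑ m, β m * (Z ω m) ^ 2) * (β i * (Z ω i) ^ 2)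
        - v (∑ m, β m * (Z ω m) ^ 2) * (β j * (Z ω j) ^ 2))
      + (v (∑ m, β (σ m) * (Z ω m) ^ 2) * (β i * (Z ω j) ^ 2)
        - v (∑ m, β (σ m) * (Z ω m) ^ 2) * (β j * (Z ω i) ^ 2))) μ := h12.add h34
  -- the symmetrized integrand
  have hT_int : Integrable (fun ω =>
      v (∑ m, β m * (Z ω m) ^ 2) * (β i * (Z ω i) ^ 2 - β j * (Z ω j) ^ 2)
        + v (∑ m, β (σ m) * (Z ω m) ^ 2) * (β i * (Z ω j) ^ 2 - β j * (Z ω i) ^ 2)) μ :=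
    h1234.congr (.of_forall fun ω => by ring)
  have hTval : (∫ ω,
      v (∑ m, β m * (Z ω m) ^ 2) * (β i * (Z ω i) ^ 2 - β j * (Z ω j) ^ 2)
        + v (∑ m, β (σ m) * (Z ω m) ^ 2) * (β i * (Z ω j) ^ 2 - β j * (Z ω i) ^ 2) ∂μ)
      = ((∫ ω, v (∑ m, β m * (Z ω m) ^ 2) * (β i * (Z ω i) ^ 2) ∂μ)
          - ∫ ω, v (∑ m, β m * (Z ω m) ^ 2) * (β j * (Z ω j) ^ 2) ∂μ)
        + ((∫ ω, v (∑ m, β (σ m) * (Z ω m) ^ 2) * (β i * (Z ω j) ^ 2) ∂μ)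
          - ∫ ω, v (∑ m, β (σ m) * (Z ω m) ^ 2) * (β j * (Z ω i) ^ 2) ∂μ) := by
    calc (∫ ω,
        v (∑ m, β m * (Z ω m) ^ 2) * (β i * (Z ω i) ^ 2 - β j * (Z ω j) ^ 2)
          + v (∑ m, β (σ m) * (Z ω m) ^ 2) * (β i * (Z ω j) ^ 2 - β j * (Z ω i) ^ 2) ∂μ)
        = ∫ ω, (v (∑ m, β m * (Z ω m) ^ 2) * (β i * (Z ω i) ^ 2)
              - v (∑ m, β m * (Z ω m) ^ 2) * (β j * (Z ω j) ^ 2))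
            + (v (∑ m, β (σ m) * (Z ω m) ^ 2) * (β i * (Z ω j) ^ 2)
              - v (∑ m, β (σ m) * (Z ω m) ^ 2) * (β j * (Z ω i) ^ 2)) ∂μ :=
          integral_congr_ae (.of_forall fun ω => by ring)
      _ = (∫ ω, v (∑ m, β m * (Z ω m) ^ 2) * (β i * (Z ω i) ^ 2)
              - v (∑ m, β m * (Z ω m) ^ 2) * (β j * (Z ω j) ^ 2) ∂μ)
          + ∫ ω, v (∑ m, β (σ m) * (Z ω m) ^ 2) * (β i * (Z ω j) ^ 2)
              - v (∑ m, β (σ m) * (Z ω m) ^ 2) * (β j * (Z ω i) ^ 2) ∂μ :=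
          integral_add h12 h34
      _ = _ := by rw [integral_sub hg1 hg2, integral_sub hg3 hg4]
  constructor
  · have h0 : 0 ≤ (∫ ω,
        v (∑ m, β m * (Z ω m) ^ 2) * (β i * (Z ω i) ^ 2 - β j * (Z ω j) ^ 2)
          + v (∑ m, β (σ m) * (Z ω m) ^ 2) * (β i * (Z ω j) ^ 2 - β j * (Z ω i) ^ 2) ∂μ) :=
      integral_nonneg fun ω => (hkey ω).1
    rw [hTval] at h0
    linarith [hI1, hI2]
  · intro hμ
    have hsupp : {ω | Z ω i ≠ 0} ⊆ Function.support (fun ω =>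
        v (∑ m, β m * (Z ω m) ^ 2) * (β i * (Z ω i) ^ 2 - β j * (Z ω j) ^ 2)
          + v (∑ m, β (σ m) * (Z ω m) ^ 2) * (β i * (Z ω j) ^ 2 - β j * (Z ω i) ^ 2)) :=
      fun ω hω => ne_of_gt ((hkey ω).2 hω)
    have h0 : 0 < (∫ ω,
        v (∑ m, β m * (Z ω m) ^ 2) * (β i * (Z ω i) ^ 2 - β j * (Z ω j) ^ 2)
          + v (∑ m, β (σ m) * (Z ω m) ^ 2) * (β i * (Z ω j) ^ 2 - β j * (Z ω i) ^ 2) ∂μ) := by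
      rw [integral_pos_iff_support_of_nonneg (fun ω => (hkey ω).1) hT_int]
      exact lt_of_lt_of_le hμ (measure_mono hsupp)
    rw [hTval] at h0
    linarith [hI1, hI2]
end

section
/- Let z_k be a sequence of unit vectors in ℝ^q and Σ_k a sequence of positive definite matrices with largest eigenvalue λ_{1,k} = 1 and smallest eigenvalue λ_{q,k} → 0, with unit eigenvector p_{q,k} for λ_{q,k}. If |p_{q,k}ᵀ z_k| is bounded away from zero for large k, then d(z_k, Σ_k) → ∞, where d(z,Σ) = q·log(zᵀΣ⁻¹z/zᵀz) + log det Σ. -/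
open Matrix Filter

/-- The ACG negative log-likelihood contribution
`d(z,S) = q·log(zᵀS⁻¹z / zᵀz) + log det S`. -/
noncomputable def acgD {q : ℕ} (z : Fin q → ℝ) (S : Matrix (Fin q) (Fin q) ℝ) : ℝ :=
  (q : ℝ) * Real.log ((z ⬝ᵥ (S⁻¹ *ᵥ z)) / (z ⬝ᵥ z)) + Real.log S.det

/-- Each eigenvalue of `S` lies in `[lam, 1]`. -/
lemma aux_eig_bounds {q : ℕ} {S : Matrix (Fin q) (Fin q) ℝ} (hS : S.PosDef) {lam : ℝ}
    (hmin : ∀ v : Fin q → ℝ, lam * (v ⬝ᵥ v) ≤ v ⬝ᵥ (S *ᵥ v))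
    (hle : ∀ v : Fin q → ℝ, v ⬝ᵥ (S *ᵥ v) ≤ v ⬝ᵥ v) (i : Fin q) :
    lam ≤ hS.1.eigenvalues i ∧ hS.1.eigenvalues i ≤ 1 := by
  set u : Fin q → ℝ := ⇑(hS.1.eigenvectorBasis i) with hu
  have huu : u ⬝ᵥ u = 1 := by
    have h1 : ‖hS.1.eigenvectorBasis i‖ = 1 := hS.1.eigenvectorBasis.orthonormal.1 i
    have h2 : (inner ℝ (hS.1.eigenvectorBasis i) (hS.1.eigenvectorBasis i) : ℝ) = 1 := by
      rw [real_inner_self_eq_norm_sq, h1]; norm_num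
    rw [← h2, PiLp.inner_apply]
    simp [dotProduct, u, mul_comm, sq]
  have hquad : u ⬝ᵥ (S *ᵥ u) = hS.1.eigenvalues i := by
    rw [hS.1.mulVec_eigenvectorBasis, dotProduct_smul, smul_eq_mul, huu, mul_one]
  constructor
  · have := hmin u; rw [hquad, huu, mul_one] at this; exact this
  · have := hle u; rw [hquad, huu] at this; exact this

/-- If the quadratic form attains `vᵀv`, some eigenvalue equals `1`. -/
lemma aux_eig_one {q : ℕ} {S : Matrix (Fin q) (Fin q) ℝ} (hS : S.PosDef)
    (hle : ∀ v : Fin q → ℝ, v ⬝ᵥ (S *ᵥ v) ≤ v ⬝ᵥ v)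
    (heq : ∃ v : Fin q → ℝ, v ≠ 0 ∧ v ⬝ᵥ (S *ᵥ v) = v ⬝ᵥ v) :
    ∃ i, hS.1.eigenvalues i = 1 := by
  obtain ⟨v, hv0, hveq⟩ := heq
  have hM : (1 - S).PosSemidef := by
    refine Matrix.posSemidef_iff_dotProduct_mulVec.mpr ⟨?_, ?_⟩
    · exact (Matrix.isHermitian_one).sub hS.1
    · intro x
      have : (1 - S) *ᵥ x = x - S *ᵥ x := by rw [Matrix.sub_mulVec, Matrix.one_mulVec]
      rw [this, star_trivial, dotProduct_sub, sub_nonneg]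
      exact hle x
  have hSv : S *ᵥ v = v := by
    have h0 : star v ⬝ᵥ ((1 - S) *ᵥ v) = 0 := by
      rw [star_trivial, Matrix.sub_mulVec, Matrix.one_mulVec, dotProduct_sub, hveq, sub_self]
    have := (hM.dotProduct_mulVec_zero_iff v).mp h0
    rw [Matrix.sub_mulVec, Matrix.one_mulVec, sub_eq_zero] at this
    exact this.symm
  have hdet : (1 - S).det = 0 := by
    rw [← Matrix.exists_mulVec_eq_zero_iff]
    exact ⟨v, hv0, by rw [Matrix.sub_mulVec, Matrix.one_mulVec, hSv, sub_self]⟩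
  have hspec := hS.1.spectral_theorem
  rw [Unitary.conjStarAlgAut_apply] at hspec
  set U : Matrix (Fin q) (Fin q) ℝ := (hS.1.eigenvectorUnitary : Matrix (Fin q) (Fin q) ℝ) with hU
  have hUU : U * star U = 1 := Matrix.mem_unitaryGroup_iff.mp hS.1.eigenvectorUnitary.2
  have h1S : 1 - S = U * (1 - Matrix.diagonal (RCLike.ofReal ∘ hS.1.eigenvalues)) * star U := by
    rw [Matrix.mul_sub, Matrix.sub_mul, Matrix.mul_one, hUU, ← hspec]
  have hUU' : star U * U = 1 := Matrix.mem_unitaryGroup_iff'.mp hS.1.eigenvectorUnitary.2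
  have hprod : (1 - S).det = ∏ i, (1 - hS.1.eigenvalues i) := by
    rw [h1S, Matrix.det_mul, Matrix.det_mul, mul_comm, ← mul_assoc, ← Matrix.det_mul, hUU']
    simp [Matrix.det_one, ← Matrix.diagonal_one, Matrix.diagonal_sub, Matrix.det_diagonal]
  rw [hprod] at hdet
  obtain ⟨i, -, hi⟩ := Finset.prod_eq_zero_iff.mp hdet
  exact ⟨i, by linarith [sub_eq_zero.mp hi]⟩

/-- Determinant lower bound `lam ^ (q-1) ≤ det S`. -/
lemma aux_det_lb {q : ℕ} {S : Matrix (Fin q) (Fin q) ℝ} (hS : S.PosDef) {lam : ℝ}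
    (hl : 0 < lam)
    (hmin : ∀ v : Fin q → ℝ, lam * (v ⬝ᵥ v) ≤ v ⬝ᵥ (S *ᵥ v))
    (hle : ∀ v : Fin q → ℝ, v ⬝ᵥ (S *ᵥ v) ≤ v ⬝ᵥ v)
    (heq : ∃ v : Fin q → ℝ, v ≠ 0 ∧ v ⬝ᵥ (S *ᵥ v) = v ⬝ᵥ v) :
    lam ^ (q - 1) ≤ S.det := by
  obtain ⟨i0, hi0⟩ := aux_eig_one hS hle heq
  have hdet : S.det = ∏ i, hS.1.eigenvalues i := by
    have := hS.1.det_eq_prod_eigenvalues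
    simpa using this
  rw [hdet, ← Finset.mul_prod_erase Finset.univ _ (Finset.mem_univ i0), hi0, one_mul]
  have hcard : (Finset.univ.erase i0).card = q - 1 := by
    rw [Finset.card_erase_of_mem (Finset.mem_univ i0), Finset.card_univ, Fintype.card_fin]
  calc lam ^ (q - 1) = ∏ _i ∈ Finset.univ.erase i0, lam := by rw [Finset.prod_const, hcard]
    _ ≤ ∏ i ∈ Finset.univ.erase i0, hS.1.eigenvalues i :=
        Finset.prod_le_prod (fun _ _ => le_of_lt hl)
          (fun i _ => (aux_eig_bounds hS hmin hle i).1)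

/-- Quadratic form of the inverse is at least `(pᵀz)²/lam`. -/
lemma aux_inv_quad {q : ℕ} {S : Matrix (Fin q) (Fin q) ℝ} (hS : S.PosDef) {lam : ℝ} (hl : 0 < lam)
    {p z : Fin q → ℝ} (hp : p ⬝ᵥ p = 1) (heig : S *ᵥ p = lam • p) :
    (p ⬝ᵥ z)^2 / lam ≤ z ⬝ᵥ (S⁻¹ *ᵥ z) := by
  have hdet : IsUnit S.det := isUnit_iff_ne_zero.mpr (ne_of_gt hS.det_pos)
  have hinv : S⁻¹ *ᵥ p = lam⁻¹ • p := by
    have h1 : lam • (S⁻¹ *ᵥ p) = p := by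
      rw [← Matrix.mulVec_smul, ← heig, Matrix.mulVec_mulVec, Matrix.nonsing_inv_mul S hdet,
        Matrix.one_mulVec]
    calc S⁻¹ *ᵥ p = lam⁻¹ • (lam • (S⁻¹ *ᵥ p)) := by
          rw [smul_smul, inv_mul_cancel₀ (ne_of_gt hl), one_smul]
      _ = lam⁻¹ • p := by rw [h1]
  have hinvPD : S⁻¹.PosDef := hS.inv
  have hsymm : S⁻¹ᵀ = S⁻¹ := by
    rw [← Matrix.conjTranspose_eq_transpose_of_trivial]; exact hinvPD.1
  set c : ℝ := p ⬝ᵥ z with hc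
  set w : Fin q → ℝ := z - c • p with hw
  have hpw : p ⬝ᵥ w = 0 := by
    rw [hw, dotProduct_sub, dotProduct_smul, smul_eq_mul, hp, mul_one, sub_self]
  have hwp : w ⬝ᵥ p = 0 := by rw [dotProduct_comm]; exact hpw
  have hz : z = c • p + w := by simp [hw]
  have hterm1 : p ⬝ᵥ (S⁻¹ *ᵥ w) = 0 := by
    rw [Matrix.dotProduct_mulVec, ← Matrix.mulVec_transpose, hsymm, hinv, smul_dotProduct,
      smul_eq_mul, hpw, mul_zero]
  have hwSw : 0 ≤ w ⬝ᵥ (S⁻¹ *ᵥ w) := by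
    have := hinvPD.posSemidef.dotProduct_mulVec_nonneg w
    rwa [star_trivial] at this
  have key : z ⬝ᵥ (S⁻¹ *ᵥ z) = c^2 * lam⁻¹ + w ⬝ᵥ (S⁻¹ *ᵥ w) := by
    conv_lhs => rw [hz]
    simp only [Matrix.mulVec_add, Matrix.mulVec_smul, add_dotProduct, dotProduct_add,
      smul_dotProduct, dotProduct_smul, hinv, smul_eq_mul, hp, hpw, hwp, hterm1]
    ring_nf
  rw [key, div_eq_mul_inv]
  linarith

/-- Let `z k` be unit vectors and `S k` positive definite matrices whose
largest eigenvalue is `1` (i.e. `vᵀS v ≤ vᵀv` with equality attained) and whose smallest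
eigenvalue `λ k → 0`, with unit eigenvector `p k` for `λ k`. If `|p kᵀ z k|` is bounded
away from zero for large `k`, then `d(z k, S k) → ∞`. -/
theorem stmt12 {q : ℕ} (hq : 0 < q)
    (z : ℕ → Fin q → ℝ) (hz : ∀ k, z k ⬝ᵥ z k = 1)
    (S : ℕ → Matrix (Fin q) (Fin q) ℝ) (hS : ∀ k, (S k).PosDef)
    (lam : ℕ → ℝ) (hlam_pos : ∀ k, 0 < lam k)
    (p : ℕ → Fin q → ℝ) (hp : ∀ k, p k ⬝ᵥ p k = 1)
    (heig : ∀ k, S k *ᵥ p k = lam k • p k)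
    (hlam_min : ∀ k, ∀ v : Fin q → ℝ, lam k * (v ⬝ᵥ v) ≤ v ⬝ᵥ (S k *ᵥ v))
    (hmax_le : ∀ k, ∀ v : Fin q → ℝ, v ⬝ᵥ (S k *ᵥ v) ≤ v ⬝ᵥ v)
    (hmax_eq : ∀ k, ∃ v : Fin q → ℝ, v ≠ 0 ∧ v ⬝ᵥ (S k *ᵥ v) = v ⬝ᵥ v)
    (hlam0 : Tendsto lam atTop (nhds 0))
    (δ : ℝ) (hδ : 0 < δ) (K : ℕ)
    (hbdd : ∀ k ≥ K, δ ≤ |p k ⬝ᵥ z k|) :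
    Tendsto (fun k => acgD (z k) (S k)) atTop atTop := by
  -- the lower bound function
  have hg : Tendsto (fun k => (q : ℝ) * Real.log (δ ^ 2) - Real.log (lam k)) atTop atTop := by
    have hlog : Tendsto (fun k => Real.log (lam k)) atTop atBot := by
      apply Real.tendsto_log_nhdsGT_zero.comp
      exact tendsto_nhdsWithin_of_tendsto_nhds_of_eventually_within _ hlam0
        (Eventually.of_forall fun k => hlam_pos k)
    have := tendsto_neg_atBot_atTop.comp hlog
    exact tendsto_atTop_add_const_left _ _ this
  apply tendsto_atTop_mono' _ _ hg
  filter_upwards [eventually_ge_atTop K] with k hk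
  have hlp := hlam_pos k
  -- quadratic bound
  have hquad : δ ^ 2 / lam k ≤ z k ⬝ᵥ ((S k)⁻¹ *ᵥ z k) := by
    refine le_trans ?_ (aux_inv_quad (hS k) hlp (hp k) (heig k))
    have hnum : δ ^ 2 ≤ (p k ⬝ᵥ z k) ^ 2 := by
      calc δ ^ 2 ≤ |p k ⬝ᵥ z k| ^ 2 := by
            apply pow_le_pow_left₀ (le_of_lt hδ) (hbdd k hk)
        _ = (p k ⬝ᵥ z k) ^ 2 := sq_abs _
    gcongr
  have hδ2 : (0:ℝ) < δ ^ 2 / lam k := div_pos (pow_pos hδ 2) hlp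
  have hdetlb : lam k ^ (q - 1) ≤ (S k).det :=
    aux_det_lb (hS k) hlp (hlam_min k) (hmax_le k) (hmax_eq k)
  have hpowpos : (0:ℝ) < lam k ^ (q - 1) := pow_pos hlp _
  -- compare logs
  have h1 : Real.log (δ ^ 2 / lam k) ≤ Real.log (z k ⬝ᵥ ((S k)⁻¹ *ᵥ z k)) :=
    Real.log_le_log hδ2 hquad
  have h2 : Real.log (lam k ^ (q - 1)) ≤ Real.log (S k).det :=
    Real.log_le_log hpowpos hdetlb
  rw [Real.log_div (ne_of_gt (pow_pos hδ 2)) (ne_of_gt hlp)] at h1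
  rw [Real.log_pow] at h2
  have hcast : ((q - 1 : ℕ) : ℝ) = (q : ℝ) - 1 := by
    rw [Nat.cast_sub hq]; norm_num
  rw [hcast] at h2
  unfold acgD
  rw [hz k, div_one]
  have hq1 : (1:ℝ) ≤ (q:ℝ) := by exact_mod_cast hq
  nlinarith [h1, h2]
end

section
/- For nonzero z ∈ ℝ^q and positive definite Σ with largest eigenvalue 1, smallest eigenvalue λ_q, and a = pᵀz/‖z‖ where p is a unit eigenvector for λ_q: d(z,Σ) ≥ q·log(a²) − log λ_q, where d(z,Σ) = q·log(zᵀΣ⁻¹z/zᵀz) + log det Σ. -/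
open Matrix


theorem psd_kernel' {q : ℕ} (M : Matrix (Fin q) (Fin q) ℝ) (hM : M.PosSemidef) (v : Fin q → ℝ)
    (h : v ⬝ᵥ (M *ᵥ v) = 0) : M *ᵥ v = 0 := by
  exact (hM.dotProduct_mulVec_zero_iff v).mp (by simpa using h)

theorem sym_dot' {q : ℕ} (S : Matrix (Fin q) (Fin q) ℝ) (hH : S.IsHermitian)
    (x y : Fin q → ℝ) : (S *ᵥ x) ⬝ᵥ y = x ⬝ᵥ (S *ᵥ y) := by
  have hT : Sᵀ = S := by
    have : Sᴴ = Sᵀ := by ext i j; simp [conjTranspose_apply]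
    rw [← this, hH]
  rw [dotProduct_mulVec x S]
  conv_rhs => rw [← hT, vecMul_transpose]

theorem unit_eigvec' {q : ℕ} (S : Matrix (Fin q) (Fin q) ℝ) (hH : S.IsHermitian) (i : Fin q) :
    (⇑(hH.eigenvectorBasis i) : Fin q → ℝ) ⬝ᵥ ⇑(hH.eigenvectorBasis i) = 1 := by
  have h := hH.eigenvectorBasis.orthonormal.1 i
  rw [EuclideanSpace.norm_eq] at h
  have h2 : ∑ j, (hH.eigenvectorBasis i j)^2 = 1 := by
    have := congrArg (· ^ 2) h
    simpa [Real.sq_sqrt (Finset.sum_nonneg fun j _ => sq_nonneg _), Real.norm_eq_abs, sq_abs]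
      using this
  simpa [dotProduct, pow_two] using h2

theorem exists_eig_one' {q : ℕ} (S : Matrix (Fin q) (Fin q) ℝ) (hH : S.IsHermitian)
    (v : Fin q → ℝ) (hv : v ≠ 0) (hSv : S *ᵥ v = v) : ∃ i, hH.eigenvalues i = 1 := by
  by_contra hc
  push_neg at hc
  apply hv
  have key : ∀ i, (⇑(hH.eigenvectorBasis i) : Fin q → ℝ) ⬝ᵥ v = 0 := by
    intro i
    have h1 : (hH.eigenvalues i) * ((⇑(hH.eigenvectorBasis i) : Fin q → ℝ) ⬝ᵥ v)
        = (⇑(hH.eigenvectorBasis i) : Fin q → ℝ) ⬝ᵥ v := by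
      calc (hH.eigenvalues i) * ((⇑(hH.eigenvectorBasis i) : Fin q → ℝ) ⬝ᵥ v)
          = (hH.eigenvalues i • (⇑(hH.eigenvectorBasis i) : Fin q → ℝ)) ⬝ᵥ v := by
            rw [smul_dotProduct]; rfl
        _ = (S *ᵥ ⇑(hH.eigenvectorBasis i)) ⬝ᵥ v := by rw [hH.mulVec_eigenvectorBasis]
        _ = (⇑(hH.eigenvectorBasis i) : Fin q → ℝ) ⬝ᵥ (S *ᵥ v) := sym_dot' S hH _ _
        _ = (⇑(hH.eigenvectorBasis i) : Fin q → ℝ) ⬝ᵥ v := by rw [hSv]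
    have h2 : (hH.eigenvalues i - 1) * ((⇑(hH.eigenvectorBasis i) : Fin q → ℝ) ⬝ᵥ v) = 0 := by
      rw [sub_mul, one_mul, h1, sub_self]
    rcases mul_eq_zero.mp h2 with h | h
    · exact absurd (by linarith : hH.eigenvalues i = 1) (hc i)
    · exact h
  have hr : ∀ i, hH.eigenvectorBasis.repr ((WithLp.equiv 2 _).symm v) i = 0 := by
    intro i
    rw [hH.eigenvectorBasis.repr_apply_apply]
    simpa [PiLp.inner_apply, dotProduct, mul_comm] using key i
  have h0 : (WithLp.equiv 2 (Fin q → ℝ)).symm v = 0 := by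
    apply hH.eigenvectorBasis.repr.injective
    ext i
    simpa using hr i
  simpa using congrArg (WithLp.equiv 2 (Fin q → ℝ)) h0

/-- For nonzero `z` and positive definite `S` with largest eigenvalue `1`
(i.e. `vᵀS v ≤ vᵀv`, with equality attained), smallest eigenvalue `λq` with unit
eigenvector `p`, and `a = pᵀz/‖z‖ ≠ 0`:
`d(z,S) ≥ q·log(a²) − log λq`. -/
theorem stmt13 {q : ℕ} (hq : 0 < q) (z : Fin q → ℝ) (hz : z ≠ 0)
    (S : Matrix (Fin q) (Fin q) ℝ) (hS : S.PosDef)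
    (lamq : ℝ) (hlam_pos : 0 < lamq)
    (p : Fin q → ℝ) (hp : p ⬝ᵥ p = 1) (heig : S *ᵥ p = lamq • p)
    (hlam_min : ∀ v : Fin q → ℝ, lamq * (v ⬝ᵥ v) ≤ v ⬝ᵥ (S *ᵥ v))
    (hmax_le : ∀ v : Fin q → ℝ, v ⬝ᵥ (S *ᵥ v) ≤ v ⬝ᵥ v)
    (hmax_eq : ∃ v : Fin q → ℝ, v ≠ 0 ∧ v ⬝ᵥ (S *ᵥ v) = v ⬝ᵥ v)
    (ha : p ⬝ᵥ z / Real.sqrt (z ⬝ᵥ z) ≠ 0) :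
    (q : ℝ) * Real.log ((p ⬝ᵥ z / Real.sqrt (z ⬝ᵥ z)) ^ 2) - Real.log lamq ≤
      acgD z S := by
  have hH : S.IsHermitian := hS.1
  set μ := hH.eigenvalues with hμ
  -- eigenvalue bounds
  have hμ_lb : ∀ i, lamq ≤ μ i := by
    intro i
    have h1 := hlam_min (⇑(hH.eigenvectorBasis i))
    rw [unit_eigvec' S hH i, hH.mulVec_eigenvectorBasis] at h1
    have h2 : (⇑(hH.eigenvectorBasis i) : Fin q → ℝ) ⬝ᵥ (μ i • ⇑(hH.eigenvectorBasis i)) = μ i := by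
      rw [dotProduct_smul, unit_eigvec' S hH i]; simp
    rw [mul_one] at h1
    calc lamq ≤ _ := h1
      _ = μ i := h2
  have hμ_pos : ∀ i, 0 < μ i := fun i => lt_of_lt_of_le hlam_pos (hμ_lb i)
  -- one eigenvalue equals 1
  obtain ⟨v, hv0, hveq⟩ := hmax_eq
  have hMpsd : ((1 : Matrix (Fin q) (Fin q) ℝ) - S).PosSemidef := by
    refine Matrix.PosSemidef.of_dotProduct_mulVec_nonneg (Matrix.isHermitian_one.sub hH) fun x => ?_
    have : star x = x := by simp
    rw [this, sub_mulVec, one_mulVec, dotProduct_sub]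
    have := hmax_le x
    linarith
  have hSv : S *ᵥ v = v := by
    have h0 : v ⬝ᵥ (((1 : Matrix (Fin q) (Fin q) ℝ) - S) *ᵥ v) = 0 := by
      rw [sub_mulVec, one_mulVec, dotProduct_sub, hveq, sub_self]
    have := psd_kernel' _ hMpsd v h0
    rw [sub_mulVec, one_mulVec, sub_eq_zero] at this
    exact this.symm
  obtain ⟨i₀, hi₀⟩ := exists_eig_one' S hH v hv0 hSv
  rw [← hμ] at hi₀
  -- determinant bound
  have hdet : S.det = ∏ i, μ i := by simpa using hH.det_eq_prod_eigenvalues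
  have hprod : lamq ^ (q - 1) ≤ S.det := by
    rw [hdet, ← Finset.prod_erase_mul Finset.univ μ (Finset.mem_univ i₀), hi₀, mul_one]
    calc lamq ^ (q - 1) = ∏ _i ∈ Finset.univ.erase i₀, lamq := by
          rw [Finset.prod_const, Finset.card_erase_of_mem (Finset.mem_univ i₀)]
          simp
      _ ≤ ∏ i ∈ Finset.univ.erase i₀, μ i :=
          Finset.prod_le_prod (fun i _ => hlam_pos.le) (fun i _ => hμ_lb i)
  have hlogdet : ((q : ℝ) - 1) * Real.log lamq ≤ Real.log S.det := by
    have h1 : Real.log (lamq ^ (q - 1)) ≤ Real.log S.det :=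
      Real.log_le_log (pow_pos hlam_pos _) hprod
    rw [Real.log_pow] at h1
    have : ((q - 1 : ℕ) : ℝ) = (q : ℝ) - 1 := by
      rw [Nat.cast_sub hq]; simp
    rwa [this] at h1
  -- positivity facts
  have hT : 0 < z ⬝ᵥ z := by
    rcases lt_or_eq_of_le (Finset.sum_nonneg fun i _ => mul_self_nonneg (z i)) with h | h
    · exact h
    · exact absurd (dotProduct_self_eq_zero.mp h.symm) hz
  have hA : 0 < z ⬝ᵥ (S⁻¹ *ᵥ z) := by
    have := hS.inv.dotProduct_mulVec_pos hz
    simpa using this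
  have hb : p ⬝ᵥ z ≠ 0 := by
    intro h; apply ha; rw [h, zero_div]
  have hb2 : 0 < (p ⬝ᵥ z) ^ 2 := pow_pos (abs_pos.mpr hb) 2 |>.trans_eq (by rw [sq_abs]) |>.trans_le le_rfl
  -- Cauchy-Schwarz : (p⬝ᵥz)^2 ≤ lamq * (z ⬝ᵥ S⁻¹ z)
  set w := S⁻¹ *ᵥ z with hw
  have hSw : S *ᵥ w = z := by
    rw [hw, mulVec_mulVec, Matrix.mul_nonsing_inv S (isUnit_iff_ne_zero.mpr hS.det_pos.ne'),
      one_mulVec]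
  have hpp : p ⬝ᵥ (S *ᵥ p) = lamq := by rw [heig, dotProduct_smul, smul_eq_mul, hp, mul_one]
  have hpw : p ⬝ᵥ (S *ᵥ w) = p ⬝ᵥ z := by rw [hSw]
  have hwp : w ⬝ᵥ (S *ᵥ p) = p ⬝ᵥ z := by
    rw [← sym_dot' S hH w p, hSw, dotProduct_comm]
  have hww : w ⬝ᵥ (S *ᵥ w) = z ⬝ᵥ (S⁻¹ *ᵥ z) := by
    rw [hSw, dotProduct_comm]
  have key : ∀ t : ℝ, 0 ≤ (z ⬝ᵥ (S⁻¹ *ᵥ z)) * (t * t) + (-(2 * (p ⬝ᵥ z))) * t + lamq := by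
    intro t
    have h0 := hS.posSemidef.dotProduct_mulVec_nonneg (p - t • w)
    have hst : star (p - t • w) = p - t • w := by simp
    rw [hst] at h0
    have hexp : (p - t • w) ⬝ᵥ (S *ᵥ (p - t • w)) =
        (z ⬝ᵥ (S⁻¹ *ᵥ z)) * (t * t) + (-(2 * (p ⬝ᵥ z))) * t + lamq := by
      rw [mulVec_sub, mulVec_smul, dotProduct_sub, sub_dotProduct, sub_dotProduct,
        dotProduct_smul, dotProduct_smul, smul_dotProduct, smul_dotProduct,
        hpp, hpw, hwp, hww]
      simp only [smul_eq_mul]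
      ring
    rw [hexp] at h0
    exact h0
  have hCS : (p ⬝ᵥ z) ^ 2 ≤ lamq * (z ⬝ᵥ (S⁻¹ *ᵥ z)) := by
    have hd := discrim_le_zero key
    rw [discrim] at hd
    nlinarith [hd]
  -- a² = b²/T
  have ha2 : (p ⬝ᵥ z / Real.sqrt (z ⬝ᵥ z)) ^ 2 = (p ⬝ᵥ z) ^ 2 / (z ⬝ᵥ z) := by
    rw [div_pow, Real.sq_sqrt hT.le]
  -- log inequality
  have hratio : (p ⬝ᵥ z) ^ 2 / (z ⬝ᵥ z) / lamq ≤ (z ⬝ᵥ (S⁻¹ *ᵥ z)) / (z ⬝ᵥ z) := by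
    rw [div_div, div_le_div_iff₀ (by positivity) hT]
    nlinarith [hCS, hT]
  have hlog1 : Real.log ((p ⬝ᵥ z) ^ 2 / (z ⬝ᵥ z)) - Real.log lamq ≤
      Real.log ((z ⬝ᵥ (S⁻¹ *ᵥ z)) / (z ⬝ᵥ z)) := by
    rw [← Real.log_div (by positivity) hlam_pos.ne']
    exact Real.log_le_log (by positivity) hratio
  have hqlog : (q : ℝ) * Real.log ((p ⬝ᵥ z) ^ 2 / (z ⬝ᵥ z)) - (q : ℝ) * Real.log lamq ≤
      (q : ℝ) * Real.log ((z ⬝ᵥ (S⁻¹ *ᵥ z)) / (z ⬝ᵥ z)) := by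
    have := mul_le_mul_of_nonneg_left hlog1 (Nat.cast_nonneg q : (0:ℝ) ≤ q)
    linarith [this]
  rw [acgD, ha2]
  have hq1 : (1 : ℝ) ≤ (q : ℝ) := by exact_mod_cast hq
  nlinarith [hqlog, hlogdet, Real.log_le_log hlam_pos (by
    have := hmax_le p
    rw [hpp, hp] at this
    exact this : lamq ≤ 1), Real.log_nonpos (by linarith [hlam_pos] : (0:ℝ) ≤ lamq) (by
    have := hmax_le p
    rw [hpp, hp] at this
    exact this)]
end

section
/- Let Σ(β,γ) denote for 0<γ<1 the unique positive definite solution of Σ = (β/n)∑ᵢ xᵢxᵢᵀ/(xᵢᵀΣ⁻¹xᵢ) + γ I_q. If Σ₁ solves this equation with parameter γ₁ and Σ₂ := (γ₂/γ₁)Σ₁, then Σ₂ solves the equation with parameter γ₂; hence the shape matrix qΣ(β,γ)/tr(Σ(β,γ)) does not depend on γ. -/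
open Matrix BigOperators

/-- If `S₁ > 0` solves `S = (β/n) ∑ᵢ xᵢxᵢᵀ/(xᵢᵀS⁻¹xᵢ) + γ₁ I` and
`S₂ := (γ₂/γ₁) S₁`, then `S₂` solves the equation with parameter `γ₂`; hence the shape
matrix `q·S/tr(S)` is the same for both. -/
theorem stmt17 {q n : ℕ} (hq : 0 < q) (hn : 0 < n) (x : Fin n → Fin q → ℝ)
    (hx : ∀ i, x i ≠ 0) (β : ℝ) (hβ0 : 0 < β) (hβq : β < q)
    (γ₁ γ₂ : ℝ) (hγ₁ : γ₁ ∈ Set.Ioo (0:ℝ) 1) (hγ₂ : γ₂ ∈ Set.Ioo (0:ℝ) 1)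
    (S₁ : Matrix (Fin q) (Fin q) ℝ) (hS₁ : S₁.PosDef)
    (heq : S₁ = (β / n) •
      (∑ i, ((x i) ⬝ᵥ (S₁⁻¹ *ᵥ (x i)))⁻¹ • vecMulVec (x i) (x i)) +
        γ₁ • (1 : Matrix (Fin q) (Fin q) ℝ)) :
    ((γ₂ / γ₁) • S₁ = (β / n) •
      (∑ i, ((x i) ⬝ᵥ (((γ₂ / γ₁) • S₁)⁻¹ *ᵥ (x i)))⁻¹ • vecMulVec (x i) (x i)) +
        γ₂ • (1 : Matrix (Fin q) (Fin q) ℝ)) ∧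
    ((q : ℝ) / S₁.trace) • S₁ = ((q : ℝ) / ((γ₂ / γ₁) • S₁).trace) • ((γ₂ / γ₁) • S₁) := by
  obtain ⟨h1, _⟩ := hγ₁
  obtain ⟨h2, _⟩ := hγ₂
  set c : ℝ := γ₂ / γ₁ with hc
  have hcpos : 0 < c := div_pos h2 h1
  have hcne : c ≠ 0 := ne_of_gt hcpos
  have hdet : IsUnit S₁.det := isUnit_iff_ne_zero.mpr hS₁.det_pos.ne'
  have hinv : (c • S₁)⁻¹ = c⁻¹ • S₁⁻¹ := by
    have h := Matrix.inv_smul' (A := S₁) (Units.mk0 c hcne) hdet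
    simpa [Units.smul_def] using h
  have hquad : ∀ i, ((x i) ⬝ᵥ ((c • S₁)⁻¹ *ᵥ (x i)))⁻¹
      = c * ((x i) ⬝ᵥ (S₁⁻¹ *ᵥ (x i)))⁻¹ := by
    intro i
    rw [hinv, Matrix.smul_mulVec, dotProduct_smul, smul_eq_mul, mul_inv,
      inv_inv]
  constructor
  · have hsum : (∑ i, ((x i) ⬝ᵥ ((c • S₁)⁻¹ *ᵥ (x i)))⁻¹ • vecMulVec (x i) (x i))
        = c • (∑ i, ((x i) ⬝ᵥ (S₁⁻¹ *ᵥ (x i)))⁻¹ • vecMulVec (x i) (x i)) := by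
      rw [Finset.smul_sum]
      exact Finset.sum_congr rfl fun i _ => by rw [hquad i, mul_smul]
    rw [hsum, smul_comm ((β : ℝ) / n) c]
    calc c • S₁ = c • ((β / n) •
        (∑ i, ((x i) ⬝ᵥ (S₁⁻¹ *ᵥ (x i)))⁻¹ • vecMulVec (x i) (x i)) +
          γ₁ • (1 : Matrix (Fin q) (Fin q) ℝ)) := by rw [← heq]
      _ = c • ((β / n) •
        (∑ i, ((x i) ⬝ᵥ (S₁⁻¹ *ᵥ (x i)))⁻¹ • vecMulVec (x i) (x i))) +
          γ₂ • (1 : Matrix (Fin q) (Fin q) ℝ) := by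
        have h3 : c • γ₁ • (1 : Matrix (Fin q) (Fin q) ℝ) = γ₂ • 1 := by
          rw [smul_smul, hc, div_mul_cancel₀ _ (ne_of_gt h1)]
        rw [smul_add, h3]
  · rw [Matrix.trace_smul, smul_smul, smul_eq_mul]
    congr 1
    rcases eq_or_ne S₁.trace 0 with h | h
    · simp [h]
    · field_simp
end
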